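/- arXiv:1604.04874 — 2 statements merged into one kernel-verified Lean document; each statement's English description precedes it below -/
import Mathlib

section
/- Let (α^k, μ^k) ∈ D_M^↑ × D_ℝ^↑ for k ∈ ℕ and let (α,μ) ∈ D_M^↑ × D_ℝ^↑ be such that t ↦ α_t is continuous in the weak topology with α_t atomless for every t, and μ is continuous. Suppose that for every T > 0, sup_{t∈[0,T]} d_LP(α^k_t, α_t) → 0 and sup_{t∈[0,T]} |μ^k(t) − μ(t)| → 0 as k → ∞, where d_LP is the Lévy–Prokhorov metric on M. Let (ξ^k, β^k, ι^k) and (ξ, β, ι) denote the unique solutions of the MVSP for (α^k, μ^k) and (α,μ), respectively. Then for every T > 0, sup_{t∈[0,T]} d_LP(ξ^k_t, ξ_t) → 0, sup_{t∈[0,T]} d_LP(β^k_t, β_t) → 0, and sup_{t∈[0,T]} |ι^k(t) − ι(t)| → 0 as k → ∞. -/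
open MeasureTheory Filter Set
open scoped NNReal ENNReal BoundedContinuousFunction Topology

noncomputable section

/-- Càdlàg on `[0,∞)`: right-continuous at every `t ≥ 0`, with left limits at
every `t > 0` (along `[0,t)`). -/
def CadlagOn {E : Type*} [TopologicalSpace E] (f : ℝ → E) : Prop :=
  (∀ t : ℝ, 0 ≤ t → ContinuousWithinAt f (Set.Ici t) t) ∧
  (∀ t : ℝ, 0 < t → ∃ l : E, Filter.Tendsto f (nhdsWithin t (Set.Ico 0 t)) (nhds l))

/-- `D_ℝ`: real-valued càdlàg paths on `[0,∞)`. -/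
def DR (f : ℝ → ℝ) : Prop := CadlagOn f

/-- `D_ℝ^↑`: nonnegative nondecreasing real-valued càdlàg paths on `[0,∞)`. -/
def DRup (f : ℝ → ℝ) : Prop :=
  CadlagOn f ∧ (∀ t : ℝ, 0 ≤ t → 0 ≤ f t) ∧ MonotoneOn f (Set.Ici 0)

/-- `D_M`: càdlàg paths with values in the space of finite nonnegative measures
on `[0,∞)`, equipped with the topology of weak convergence. -/
def DM (ζ : ℝ → FiniteMeasure ℝ≥0) : Prop := CadlagOn ζ

/-- `D_M^↑`: paths in `D_M` such that `t ↦ ∫ f dζ_t` is nondecreasing for every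
nonnegative bounded continuous `f` on `[0,∞)`. -/
def DMup (ζ : ℝ → FiniteMeasure ℝ≥0) : Prop :=
  CadlagOn ζ ∧
  ∀ f : ℝ≥0 →ᵇ ℝ≥0, MonotoneOn (fun t => (ζ t).testAgainstNN f) (Set.Ici 0)

/-- First component of the Skorokhod map on the half-line:
`Γ₁[ψ](t) = ψ(t) − inf_{s∈[0,t]} (ψ(s) ∧ 0)`. -/
def Gamma1 (ψ : ℝ → ℝ) (t : ℝ) : ℝ :=
  ψ t - sInf ((fun s => min (ψ s) 0) '' Set.Icc 0 t)

/-- Second component of the Skorokhod map on the half-line: `Γ₂[ψ] = Γ₁[ψ] − ψ`. -/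
def Gamma2 (ψ : ℝ → ℝ) (t : ℝ) : ℝ := Gamma1 ψ t - ψ t

/-- Extension of `g : [0,∞) → ℝ` by `0` on `(-∞,0)`. -/
def lsExt (g : ℝ → ℝ) : ℝ → ℝ := fun t => if t < 0 then 0 else g t

/- The Lebesgue–Stieltjes measure `m^g(B) = g(0)δ₀(B) + ∫_{(0,∞)} 1_B dg` of a
nonnegative nondecreasing right-continuous `g` on `[0,∞)`, realized as the
Stieltjes measure of the extension of `g` by `0` on `(-∞,0)`. -/
open scoped Classical in
def lsMeasure (g : ℝ → ℝ) : Measure ℝ :=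
  if h : Monotone (lsExt g) ∧ ∀ t, ContinuousWithinAt (lsExt g) (Set.Ici t) t then
    StieltjesFunction.measure ⟨lsExt g, h.1, h.2⟩
  else 0

/-- The measure-valued Skorokhod problem (MVSP): `(ξ,β,ι)` solves the MVSP for
the data `(α,μ)`. -/
def SolvesMVSP (α : ℝ → FiniteMeasure ℝ≥0) (μ : ℝ → ℝ)
    (ξ β : ℝ → FiniteMeasure ℝ≥0) (ι : ℝ → ℝ) : Prop :=
  (∀ x : ℝ≥0, ∀ t : ℝ, 0 ≤ t →
    (ξ t (Set.Iic x) : ℝ) = (α t (Set.Iic x) : ℝ) - μ t + (β t (Set.Ioi x) : ℝ) + ι t) ∧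
  (∀ x : ℝ≥0, ∀ᵐ t ∂(lsMeasure (fun s => (β s (Set.Ioi x) : ℝ))), (ξ t (Set.Iic x) : ℝ) = 0) ∧
  (∀ x : ℝ≥0, ∀ᵐ t ∂(lsMeasure ι), (ξ t (Set.Iic x) : ℝ) = 0) ∧
  (∀ t : ℝ, 0 ≤ t → (β t Set.univ : ℝ) + ι t = μ t)

/-- System (30): `(ξ,β,ι)` solves the MVSP for `(α, μ+ρ)` and `ξ_t[0,t) = 0`
for every `t > 0`. -/
def Solves30 (α : ℝ → FiniteMeasure ℝ≥0) (μ : ℝ → ℝ)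
    (ξ β : ℝ → FiniteMeasure ℝ≥0) (ι ρ : ℝ → ℝ) : Prop :=
  SolvesMVSP α (fun t => μ t + ρ t) ξ β ι ∧
  ∀ t : ℝ, 0 < t → (ξ t (Set.Iio (Real.toNNReal t)) : ℝ) = 0

/-- A minimal solution of system (30): a solution (lying in the appropriate
path spaces) whose reneging function `ρ` is pointwise below that of any other
solution. -/
def IsMinimalSol30 (α : ℝ → FiniteMeasure ℝ≥0) (μ : ℝ → ℝ)
    (ξ β : ℝ → FiniteMeasure ℝ≥0) (ι ρ : ℝ → ℝ) : Prop :=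
  (DM ξ ∧ DMup β ∧ DRup ι ∧ DRup ρ ∧ Solves30 α μ ξ β ι ρ) ∧
  ∀ (ξ' β' : ℝ → FiniteMeasure ℝ≥0) (ι' ρ' : ℝ → ℝ),
    DM ξ' → DMup β' → DRup ι' → DRup ρ' → Solves30 α μ ξ' β' ι' ρ' →
    ∀ t : ℝ, 0 ≤ t → ρ t ≤ ρ' t

/-- The (topological) support of a finite measure on `[0,∞)`: the set of points
all of whose open neighborhoods have positive measure. -/
def measSupport (ν : FiniteMeasure ℝ≥0) : Set ℝ≥0 :=
  {x : ℝ≥0 | ∀ u : Set ℝ≥0, IsOpen u → x ∈ u → ν u ≠ 0}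

/-- `σ(ν) = inf supp[ν]`, with value `∞` when `ν = 0`. -/
def sigmaOf (ν : FiniteMeasure ℝ≥0) : ℝ≥0∞ :=
  sInf ((fun x : ℝ≥0 => (x : ℝ≥0∞)) '' measSupport ν)

/-- Assumption A on the data `(α,μ)`. -/
def AssumptionA (α : ℝ → FiniteMeasure ℝ≥0) (μ : ℝ → ℝ) : Prop :=
  (∃ (ξ0 : FiniteMeasure ℝ≥0) (a0 : ℝ → FiniteMeasure ℝ≥0)
      (lam : ℝ → ℝ) (ν : FiniteMeasure ℝ≥0),
    (∀ x : ℝ≥0, ξ0 {x} = 0) ∧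
    ContinuousOn a0 (Set.Ici 0) ∧ DMup a0 ∧
    (∀ t : ℝ, 0 ≤ t → ∀ x : ℝ≥0, a0 t {x} = 0) ∧
    Measurable lam ∧ (∀ s : ℝ, 0 ≤ s → 0 ≤ lam s) ∧
    (∀ t : ℝ, 0 ≤ t → α t = a0 t + ξ0) ∧
    (∀ t : ℝ, 0 ≤ t → ∀ x : ℝ≥0, (a0 t (Set.Iic x) : ℝ) =
      ∫ s in Set.Icc (0:ℝ) t,
        (if s ≤ (x:ℝ) then lam s * (ν (Set.Iic (Real.toNNReal ((x:ℝ) - s))) : ℝ) else 0)) ∧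
    (∀ t : ℝ, 0 ≤ t →
      Filter.Tendsto (fun x : ℝ≥0 =>
          sSup ((fun s => lam s * (ν (Set.Iic x) : ℝ)) '' Set.Icc (0:ℝ) t))
        (nhdsWithin 0 (Set.Ioi 0)) (nhds 0))) ∧
  (∃ μ0 m : ℝ → ℝ,
    ContinuousOn μ0 (Set.Ici 0) ∧ (∀ t : ℝ, 0 ≤ t → 0 ≤ μ0 t) ∧
    MonotoneOn μ0 (Set.Ici 0) ∧
    Measurable m ∧ (∀ s : ℝ, 0 ≤ s → 0 ≤ m s) ∧
    (∀ t : ℝ, 0 ≤ t → MeasureTheory.IntegrableOn m (Set.Icc 0 t)) ∧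
    (∀ t : ℝ, 0 ≤ t → 0 < sInf (m '' Set.Icc (0:ℝ) t)) ∧
    (∀ t : ℝ, 0 ≤ t → μ t = μ0 t + ∫ s in Set.Icc (0:ℝ) t, m s))


/-!
Fix a level `x`. By (1)–(3), `ξ_·[0,x]` is the reflection of the input `α_·[0,x] - μ` with
regulator `β_·(x,∞) + ι`, so by uniqueness for the one-dimensional Skorokhod problem
`ξ_t[0,x] = Γ₁[α_·[0,x] - μ](t)`, and `Γ₁` is Lipschitz for the uniform norm on `[0,t]`.
Together with `ξ_t + β_t = α_t` and `β_t[0,∞) + ι(t) = μ(t)`, uniform closeness of the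
distribution functions of the data gives uniform closeness of those of the solutions.

It remains to compare distribution functions with the Lévy–Prokhorov metric, uniformly in
`t ∈ [0,T]`. Since `α_t ≤ α_T` and `α_T` is atomless, the distribution functions of all `α_t`
share one modulus of continuity, so Lévy–Prokhorov closeness to `α_t` yields closeness of
distribution functions. Conversely, closeness of distribution functions yields Lévy–Prokhorov
closeness by partitioning `[0,X]` into finitely many cells of small width, the tails beyond `X`
being controlled by `ξ_t, β_t ≤ α_t ≤ α_T`.
-/

theorem MeasureTheory.Measure.le_of_forall_lintegral_le {X : Type*} [TopologicalSpace X]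
    [TopologicalSpace.PseudoMetrizableSpace X] [MeasurableSpace X] [BorelSpace X]
    {μ ν : Measure X} [IsFiniteMeasure μ] [IsFiniteMeasure ν]
    (h : ∀ f : X →ᵇ ℝ≥0, ∫⁻ x, f x ∂μ ≤ ∫⁻ x, f x ∂ν) : μ ≤ ν := by
  have hclosed : ∀ F, IsClosed F → μ F ≤ ν F := fun F hF =>
    le_of_tendsto_of_tendsto' (HasOuterApproxClosed.tendsto_lintegral_apprSeq hF μ)
      (HasOuterApproxClosed.tendsto_lintegral_apprSeq hF ν) fun n => h _
  refine Measure.le_iff.2 fun A hA => ?_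
  rw [hA.measure_eq_iSup_isClosed_of_ne_top (measure_ne_top μ A)]
  exact iSup_le fun K => iSup_le fun hK => iSup_le fun hKc =>
    (hclosed K hKc).trans (measure_mono hK)

namespace MeasureTheory.FiniteMeasure

theorem tendsto_apply_Iic_atTop {X : Type*} [MeasurableSpace X] [Preorder X]
    [(atTop : Filter X).IsCountablyGenerated] (ν : FiniteMeasure X) :
    Tendsto (fun x => (ν (Iic x) : ℝ)) atTop (𝓝 (ν univ : ℝ)) :=
  (ENNReal.tendsto_toReal (measure_ne_top _ _)).comp (tendsto_measure_Iic_atTop (ν : Measure X))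

variable {X : Type*} [MeasurableSpace X] [TopologicalSpace X] [LinearOrder X]
  [OrderClosedTopology X] [OpensMeasurableSpace X] (ν : FiniteMeasure X)

theorem apply_Iic_add_apply_Ioc {a b : X} (hab : a ≤ b) :
    (ν (Iic a) : ℝ) + ν (Ioc a b) = ν (Iic b) := by
  rw [← Iic_union_Ioc_eq_Iic hab]
  exact (measureReal_union (μ := (ν : Measure X)) (Iic_disjoint_Ioc le_rfl)
    measurableSet_Ioc).symm

theorem apply_Iic_add_apply_Ioi (a : X) : (ν (Iic a) : ℝ) + ν (Ioi a) = ν univ := by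
  rw [← compl_Iic]
  exact measureReal_add_measureReal_compl (μ := (ν : Measure X)) measurableSet_Iic

theorem tendsto_apply_Ioi_atTop [(atTop : Filter X).IsCountablyGenerated] :
    Tendsto (fun x => (ν (Ioi x) : ℝ)) atTop (𝓝 0) := by
  have h := (tendsto_const_nhds (x := (ν univ : ℝ))).sub ν.tendsto_apply_Iic_atTop
  rw [sub_self] at h
  exact h.congr fun x => by linarith [ν.apply_Iic_add_apply_Ioi x]

end MeasureTheory.FiniteMeasure

namespace DMup

variable {ζ : ℝ → FiniteMeasure ℝ≥0}

theorem toMeasure_mono (hζ : DMup ζ) {s t : ℝ} (hs : 0 ≤ s) (hst : s ≤ t) :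
    (ζ s : Measure ℝ≥0) ≤ ζ t :=
  Measure.le_of_forall_lintegral_le fun f => by
    simpa only [← FiniteMeasure.testAgainstNN_coe_eq, ENNReal.coe_le_coe] using
      hζ.2 f hs (hs.trans hst) hst

theorem apply_mono (hζ : DMup ζ) {s t : ℝ} (hs : 0 ≤ s) (hst : s ≤ t) (A : Set ℝ≥0) :
    (ζ s A : ℝ) ≤ ζ t A :=
  ENNReal.toReal_mono (measure_ne_top _ _) (Measure.le_iff'.1 (hζ.toMeasure_mono hs hst) A)

/-- Both `ζ · A` and `ζ · Aᶜ` are nondecreasing, and their sum, the mass, is right-continuous. -/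
theorem continuousWithinAt_apply (hζ : DMup ζ) {A : Set ℝ≥0} (hA : MeasurableSet A) {t : ℝ}
    (ht : 0 ≤ t) : ContinuousWithinAt (fun s => (ζ s A : ℝ)) (Ici t) t := by
  have hmass : ContinuousWithinAt (fun s => (ζ s univ : ℝ)) (Ici t) t :=
    (NNReal.continuous_coe.comp FiniteMeasure.continuous_mass).continuousAt.comp_continuousWithinAt
      (hζ.1.1 t ht)
  have hupper : ContinuousWithinAt (fun s => (ζ t A : ℝ) + ((ζ s univ : ℝ) - ζ t univ)) (Ici t) t :=
    continuousWithinAt_const.add (hmass.sub continuousWithinAt_const)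
  have hsplit : ∀ s, (ζ s A : ℝ) + ζ s Aᶜ = ζ s univ := fun s =>
    measureReal_add_measureReal_compl (μ := (ζ s : Measure ℝ≥0)) hA
  refine tendsto_of_tendsto_of_tendsto_of_le_of_le' tendsto_const_nhds
    (by simpa only [sub_self, add_zero] using hupper.tendsto) ?_ ?_
  · filter_upwards [self_mem_nhdsWithin] with s hs using hζ.apply_mono ht hs A
  · filter_upwards [self_mem_nhdsWithin] with s hs
    linarith [hsplit s, hsplit t, hζ.apply_mono ht hs Aᶜ]

end DMup

theorem lsExt_of_nonneg {g : ℝ → ℝ} {t : ℝ} (ht : 0 ≤ t) : lsExt g t = g t := if_neg ht.not_gt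

theorem lsExt_of_neg {g : ℝ → ℝ} {t : ℝ} (ht : t < 0) : lsExt g t = 0 := if_pos ht

theorem monotone_lsExt {g : ℝ → ℝ} (h0 : ∀ t, 0 ≤ t → 0 ≤ g t) (hg : MonotoneOn g (Ici 0)) :
    Monotone (lsExt g) := by
  intro a b hab
  rcases lt_or_ge b 0 with hb | hb
  · rw [lsExt_of_neg hb, lsExt_of_neg (hab.trans_lt hb)]
  rw [lsExt_of_nonneg hb]
  rcases lt_or_ge a 0 with ha | ha
  · rw [lsExt_of_neg ha]; exact h0 b hb
  · rw [lsExt_of_nonneg ha]; exact hg ha hb hab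

theorem continuousWithinAt_lsExt {g : ℝ → ℝ} (hg : ∀ t, 0 ≤ t → ContinuousWithinAt g (Ici t) t)
    (t : ℝ) : ContinuousWithinAt (lsExt g) (Ici t) t := by
  rcases lt_or_ge t 0 with ht | ht
  · have hzero : lsExt g =ᶠ[𝓝[Ici t] t] fun _ => 0 :=
      nhdsWithin_le_nhds ((eventually_lt_nhds ht).mono fun s hs => lsExt_of_neg hs)
    exact continuousWithinAt_const.congr_of_eventuallyEq hzero (lsExt_of_neg ht)
  · exact (hg t ht).congr (fun s hs => lsExt_of_nonneg (ht.trans hs)) (lsExt_of_nonneg ht)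

def lsStieltjes (g : ℝ → ℝ) (h0 : ∀ t, 0 ≤ t → 0 ≤ g t) (hg : MonotoneOn g (Ici 0))
    (hrc : ∀ t, 0 ≤ t → ContinuousWithinAt g (Ici t) t) : StieltjesFunction ℝ :=
  ⟨lsExt g, monotone_lsExt h0 hg, continuousWithinAt_lsExt hrc⟩

theorem lsMeasure_eq_measure_lsStieltjes {g : ℝ → ℝ} (h0 : ∀ t, 0 ≤ t → 0 ≤ g t)
    (hg : MonotoneOn g (Ici 0)) (hrc : ∀ t, 0 ≤ t → ContinuousWithinAt g (Ici t) t) :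
    lsMeasure g = (lsStieltjes g h0 hg hrc).measure :=
  dif_pos ⟨monotone_lsExt h0 hg, continuousWithinAt_lsExt hrc⟩

/-- With `u` the last time before `t` at which `F ≤ c`, the measure of `F` does not charge
`(u, t]`, nor `[u, t]` when `F u > c`; in the latter case `F t` is at most the left limit at `u`. -/
theorem StieltjesFunction.le_of_measure_setOf_lt_eq_zero (F : StieltjesFunction ℝ) {c t : ℝ}
    (hnull : F.measure {s | s ≤ t ∧ c < F s} = 0) (h₀ : ∃ s₀ ≤ t, F s₀ ≤ c) : F t ≤ c := by
  set A := {s | s ≤ t ∧ F s ≤ c}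
  have hA : A.Nonempty := h₀
  have hAbdd : BddAbove A := ⟨t, fun s hs => hs.1⟩
  have hut : sSup A ≤ t := csSup_le hA fun s hs => hs.1
  have habove : ∀ s ∈ Ioc (sSup A) t, c < F s := fun s hs =>
    not_le.1 fun hle => hs.1.not_ge (le_csSup hAbdd ⟨hs.2, hle⟩)
  by_cases hu : F (sSup A) ≤ c
  · have hIoc : Ioc (sSup A) t ⊆ {s | s ≤ t ∧ c < F s} := fun s hs => ⟨hs.2, habove s hs⟩
    have h := measure_mono_null hIoc hnull
    rw [F.measure_Ioc, ENNReal.ofReal_eq_zero] at h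
    linarith
  · have hIcc : Icc (sSup A) t ⊆ {s | s ≤ t ∧ c < F s} := fun s hs =>
      ⟨hs.2, hs.1.eq_or_lt.elim (fun h => h ▸ not_le.1 hu) fun h => habove s ⟨h, hs.2⟩⟩
    have h := measure_mono_null hIcc hnull
    rw [F.measure_Icc, ENNReal.ofReal_eq_zero] at h
    have hleft : Function.leftLim F (sSup A) ≤ c := by
      rw [F.mono.leftLim_eq_sSup]
      refine csSup_le (nonempty_Iio.image _) ?_
      rintro _ ⟨s, hs, rfl⟩
      obtain ⟨a, ha, hsa⟩ := exists_lt_of_lt_csSup hA hs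
      exact (F.mono hsa.le).trans ha.2
    linarith

theorem Gamma2_eq_neg_sInf (ψ : ℝ → ℝ) (t : ℝ) :
    Gamma2 ψ t = -sInf ((fun s => min (ψ s) 0) '' Icc 0 t) := by
  unfold Gamma2 Gamma1; ring

/-- Uniqueness for the Skorokhod problem on the half-line. -/
theorem StieltjesFunction.eq_Gamma2 (F : StieltjesFunction ℝ) {ψ : ℝ → ℝ}
    (hF : ∀ s < 0, F s = 0) (hpos : ∀ s, 0 ≤ s → 0 ≤ ψ s + F s)
    (hcompl : ∀ᵐ s ∂F.measure, 0 ≤ s → ψ s + F s = 0) {t : ℝ} (ht : 0 ≤ t) :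
    F t = Gamma2 ψ t := by
  set I := sInf ((fun s => min (ψ s) 0) '' Icc 0 t)
  have hF0 : 0 ≤ F t := hF (-1) (by norm_num) ▸ F.mono (by linarith)
  have hlow : ∀ s ∈ Icc 0 t, -F t ≤ min (ψ s) 0 := fun s hs =>
    le_min (by linarith [hpos s hs.1, F.mono hs.2]) (by linarith)
  have hI : ∀ s ∈ Icc 0 t, I ≤ min (ψ s) 0 := fun s hs =>
    csInf_le ⟨-F t, by rintro _ ⟨s, hs, rfl⟩; exact hlow s hs⟩ (mem_image_of_mem _ hs)
  have hI0 : I ≤ 0 := (hI t ⟨ht, le_rfl⟩).trans (min_le_right _ _)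
  rw [Gamma2_eq_neg_sInf]
  refine le_antisymm (F.le_of_measure_setOf_lt_eq_zero (measure_mono_null ?_ (ae_iff.1 hcompl))
    ⟨-1, by linarith, by rw [hF _ (by norm_num)]; linarith⟩) ?_
  · rintro s ⟨hst, hs⟩
    have hs0 : 0 ≤ s := not_lt.1 fun h => by rw [hF s h] at hs; linarith
    have hIs := hI s ⟨hs0, hst⟩
    have hmin := min_le_left (ψ s) 0
    exact fun h => (h hs0).not_gt (by linarith)
  · linarith [le_csInf ((nonempty_Icc.2 ht).image _) (by rintro _ ⟨s, hs, rfl⟩; exact hlow s hs)]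

theorem abs_Gamma2_sub_le {ψ₁ ψ₂ : ℝ → ℝ} {t d : ℝ} (ht : 0 ≤ t)
    (hb₁ : BddBelow ((fun s => min (ψ₁ s) 0) '' Icc 0 t))
    (hb₂ : BddBelow ((fun s => min (ψ₂ s) 0) '' Icc 0 t))
    (hd : ∀ s ∈ Icc 0 t, |ψ₁ s - ψ₂ s| ≤ d) : |Gamma2 ψ₁ t - Gamma2 ψ₂ t| ≤ d := by
  have key : ∀ {φ₁ φ₂ : ℝ → ℝ}, BddBelow ((fun s => min (φ₁ s) 0) '' Icc 0 t) →
      (∀ s ∈ Icc 0 t, |φ₁ s - φ₂ s| ≤ d) →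
      sInf ((fun s => min (φ₁ s) 0) '' Icc 0 t) - d ≤
        sInf ((fun s => min (φ₂ s) 0) '' Icc 0 t) := by
    intro φ₁ φ₂ hb h
    refine le_csInf ((nonempty_Icc.2 ht).image _) ?_
    rintro _ ⟨s, hs, rfl⟩
    have h₁ := csInf_le hb (mem_image_of_mem _ hs)
    have h₂ := abs_le.1 (h s hs)
    exact le_min (by linarith [min_le_left (φ₁ s) 0]) (by linarith [min_le_right (φ₁ s) 0])
  rw [Gamma2_eq_neg_sInf, Gamma2_eq_neg_sInf, abs_le]
  constructor <;> linarith [key hb₁ hd, key hb₂ fun s hs => abs_sub_comm (ψ₁ s) (ψ₂ s) ▸ hd s hs]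

def skorokhodInput (α : ℝ → FiniteMeasure ℝ≥0) (μ : ℝ → ℝ) (x : ℝ≥0) (t : ℝ) : ℝ :=
  (α t (Iic x) : ℝ) - μ t

theorem bddBelow_skorokhodInput {α : ℝ → FiniteMeasure ℝ≥0} {μ : ℝ → ℝ} (hμ : DRup μ)
    (x : ℝ≥0) (t : ℝ) : BddBelow ((fun s => min (skorokhodInput α μ x s) 0) '' Icc 0 t) := by
  refine ⟨-μ t, ?_⟩
  rintro _ ⟨s, hs, rfl⟩
  have hμst := hμ.2.2 hs.1 (hs.1.trans hs.2) hs.2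
  exact le_min (by unfold skorokhodInput; linarith [(α s (Iic x)).coe_nonneg])
    (by linarith [hμ.2.1 s hs.1])

namespace SolvesMVSP

variable {α : ℝ → FiniteMeasure ℝ≥0} {μ : ℝ → ℝ} {ξ β : ℝ → FiniteMeasure ℝ≥0} {ι : ℝ → ℝ}

theorem apply_Iic_eq (hβ : DMup β) (hι : DRup ι) (hS : SolvesMVSP α μ ξ β ι) (x : ℝ≥0)
    {t : ℝ} (ht : 0 ≤ t) :
    (ξ t (Iic x) : ℝ) = skorokhodInput α μ x t + Gamma2 (skorokhodInput α μ x) t := by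
  set g := fun s => (β s (Ioi x) : ℝ)
  have hrcβ : ∀ s, 0 ≤ s → ContinuousWithinAt g (Ici s) s := fun s hs =>
    hβ.continuousWithinAt_apply measurableSet_Ioi hs
  set F₁ := lsStieltjes g (fun _ _ => NNReal.coe_nonneg _)
    (fun a ha _ _ hab => hβ.apply_mono ha hab _) hrcβ
  set F₂ := lsStieltjes ι hι.2.1 hι.2.2 fun s hs => hι.1.1 s hs
  have hF : ∀ s, (F₁ + F₂) s = lsExt g s + lsExt ι s := fun s => rfl
  have hξ : ∀ s, 0 ≤ s → (ξ s (Iic x) : ℝ) = skorokhodInput α μ x s + (F₁ + F₂) s :=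
    fun s hs => by
      rw [hF, lsExt_of_nonneg hs, lsExt_of_nonneg hs, hS.1 x s hs, skorokhodInput]; ring
  have hcompl : ∀ᵐ s ∂(F₁ + F₂).measure, 0 ≤ s → skorokhodInput α μ x s + (F₁ + F₂) s = 0 := by
    have hm₁ : F₁.measure = lsMeasure g := (lsMeasure_eq_measure_lsStieltjes _ _ _).symm
    have hm₂ : F₂.measure = lsMeasure ι := (lsMeasure_eq_measure_lsStieltjes _ _ _).symm
    rw [StieltjesFunction.measure_add, ae_add_measure_iff, hm₁, hm₂]
    exact ⟨(hS.2.1 x).mono fun s hs h0 => (hξ s h0).symm.trans hs,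
      (hS.2.2.1 x).mono fun s hs h0 => (hξ s h0).symm.trans hs⟩
  have hFneg : ∀ s < 0, (F₁ + F₂) s = 0 := fun s hs => by
    rw [hF, lsExt_of_neg hs, lsExt_of_neg hs, add_zero]
  rw [hξ t ht, (F₁ + F₂).eq_Gamma2 hFneg (fun s hs => hξ s hs ▸ NNReal.coe_nonneg _) hcompl ht]

theorem toMeasure_add_eq (hS : SolvesMVSP α μ ξ β ι) {t : ℝ} (ht : 0 ≤ t) :
    (ξ t : Measure ℝ≥0) + β t = α t := by
  refine Measure.ext_of_Iic _ _ fun x => ?_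
  have hreal : (ξ t (Iic x) : ℝ) + β t (Iic x) = α t (Iic x) := by
    linarith [hS.1 x t ht, hS.2.2.2 t ht, (β t).apply_Iic_add_apply_Ioi x]
  rw [Measure.add_apply, ← ofReal_measureReal, ← ofReal_measureReal, ← ofReal_measureReal,
    ← ENNReal.ofReal_add measureReal_nonneg measureReal_nonneg]
  exact congrArg ENNReal.ofReal hreal

theorem apply_add_eq (hS : SolvesMVSP α μ ξ β ι) {t : ℝ} (ht : 0 ≤ t) (A : Set ℝ≥0) :
    (ξ t A : ℝ) + β t A = α t A := by
  have h := congrArg (fun m : Measure ℝ≥0 => m.real A) (hS.toMeasure_add_eq ht)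
  rwa [measureReal_add_apply] at h

theorem apply_le (hS : SolvesMVSP α μ ξ β ι) {t : ℝ} (ht : 0 ≤ t) (A : Set ℝ≥0) :
    (ξ t A : ℝ) ≤ α t A ∧ (β t A : ℝ) ≤ α t A := by
  have h := hS.apply_add_eq ht A
  constructor <;> linarith [(ξ t A).coe_nonneg, (β t A).coe_nonneg]

end SolvesMVSP

def CdfClose (m m' : FiniteMeasure ℝ≥0) (ε : ℝ) : Prop :=
  ∀ x : ℝ≥0, |(m (Iic x) : ℝ) - m' (Iic x)| ≤ ε

namespace CdfClose

variable {m m' : FiniteMeasure ℝ≥0} {ε : ℝ}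

theorem mono (h : CdfClose m m' ε) {ε' : ℝ} (hε : ε ≤ ε') : CdfClose m m' ε' :=
  fun x => (h x).trans hε

theorem abs_sub_apply_univ_le (h : CdfClose m m' ε) : |(m univ : ℝ) - m' univ| ≤ ε :=
  le_of_tendsto (m.tendsto_apply_Iic_atTop.sub m'.tendsto_apply_Iic_atTop).abs
    (Eventually.of_forall h)

end CdfClose

theorem SolvesMVSP.cdfClose_of_cdfClose {α α' : ℝ → FiniteMeasure ℝ≥0} {μ μ' : ℝ → ℝ}
    {ξ ξ' β β' : ℝ → FiniteMeasure ℝ≥0} {ι ι' : ℝ → ℝ}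
    (hμ : DRup μ) (hβ : DMup β) (hι : DRup ι) (hS : SolvesMVSP α μ ξ β ι)
    (hμ' : DRup μ') (hβ' : DMup β') (hι' : DRup ι') (hS' : SolvesMVSP α' μ' ξ' β' ι')
    {t e : ℝ} (ht : 0 ≤ t) (hα : ∀ s ∈ Icc 0 t, CdfClose (α' s) (α s) e)
    (hμe : ∀ s ∈ Icc 0 t, |μ' s - μ s| ≤ e) :
    CdfClose (ξ' t) (ξ t) (4 * e) ∧ CdfClose (β' t) (β t) (5 * e) ∧ |ι' t - ι t| ≤ 6 * e := by
  have hψ : ∀ x, ∀ s ∈ Icc 0 t,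
      |skorokhodInput α' μ' x s - skorokhodInput α μ x s| ≤ 2 * e := fun x s hs => by
    have h₁ := abs_le.1 (hα s hs x)
    have h₂ := abs_le.1 (hμe s hs)
    rw [skorokhodInput, skorokhodInput, abs_le]
    constructor <;> linarith
  have hξ : CdfClose (ξ' t) (ξ t) (4 * e) := fun x => by
    rw [hS'.apply_Iic_eq hβ' hι' x ht, hS.apply_Iic_eq hβ hι x ht]
    have h₁ := abs_le.1 (hψ x t ⟨ht, le_rfl⟩)
    have h₂ := abs_le.1 (abs_Gamma2_sub_le ht (bddBelow_skorokhodInput hμ' x t)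
      (bddBelow_skorokhodInput hμ x t) (hψ x))
    rw [abs_le]
    constructor <;> linarith
  have hβc : CdfClose (β' t) (β t) (5 * e) := fun x => by
    have h₁ := abs_le.1 (hξ x)
    have h₂ := abs_le.1 (hα t ⟨ht, le_rfl⟩ x)
    rw [abs_le]
    constructor <;> linarith [hS.apply_add_eq ht (Iic x), hS'.apply_add_eq ht (Iic x)]
  refine ⟨hξ, hβc, ?_⟩
  have h₁ := abs_le.1 hβc.abs_sub_apply_univ_le
  have h₂ := abs_le.1 (hμe t ⟨ht, le_rfl⟩)
  rw [abs_le]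
  constructor <;> linarith [hS.2.2.2 t ht, hS'.2.2.2 t ht]

namespace MeasureTheory.FiniteMeasure

variable (ν : FiniteMeasure ℝ≥0)

theorem abs_apply_Iic_sub_le_apply_closedBall (x y : ℝ≥0) :
    |(ν (Iic y) : ℝ) - ν (Iic x)| ≤ ν (Metric.closedBall x (dist y x)) := by
  have hball : ∀ a b : ℝ≥0, a ≤ b → Ioc a b ⊆ Metric.closedBall x (dist y x) →
      |(ν (Iic b) : ℝ) - ν (Iic a)| ≤ ν (Metric.closedBall x (dist y x)) := fun a b hab hsub => by
    rw [← ν.apply_Iic_add_apply_Ioc hab, add_sub_cancel_left, abs_of_nonneg (NNReal.coe_nonneg _)]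
    exact measureReal_mono (μ := (ν : Measure ℝ≥0)) hsub
  rcases le_total x y with hxy | hyx
  · refine hball x y hxy fun z hz => ?_
    have h₁ : (x : ℝ) < z := hz.1
    have h₂ : (z : ℝ) ≤ y := hz.2
    rw [Metric.mem_closedBall, NNReal.dist_eq, NNReal.dist_eq, abs_of_pos (by linarith),
      abs_of_nonneg (by linarith)]
    linarith
  · rw [abs_sub_comm]
    refine hball y x hyx fun z hz => ?_
    have h₁ : (y : ℝ) < z := hz.1
    have h₂ : (z : ℝ) ≤ x := hz.2
    rw [Metric.mem_closedBall, NNReal.dist_eq, NNReal.dist_eq, abs_of_nonpos (by linarith),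
      abs_of_nonpos (by linarith)]
    linarith

theorem continuous_apply_Iic (hν : ∀ x, ν {x} = 0) : Continuous fun x : ℝ≥0 => (ν (Iic x) : ℝ) := by
  refine continuous_iff_continuousAt.2 fun x => ?_
  have hball : Tendsto (fun r => (ν (Metric.cthickening r {x}) : ℝ)) (𝓝 0) (𝓝 0) := by
    have h := (ENNReal.tendsto_toReal (measure_ne_top _ _)).comp
      (tendsto_measure_cthickening_of_isClosed (μ := (ν : Measure ℝ≥0)) (s := {x})
        ⟨1, one_pos, measure_ne_top _ _⟩ isClosed_singleton)
    rwa [← FiniteMeasure.ennreal_coeFn_eq_coeFn_toMeasure, hν, ENNReal.coe_zero,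
      ENNReal.toReal_zero] at h
  have hdist : Tendsto (fun y => dist y x) (𝓝 x) (𝓝 0) := by
    simpa using ((continuous_id.dist continuous_const).tendsto x :
      Tendsto (fun y : ℝ≥0 => dist y x) (𝓝 x) _)
  rw [ContinuousAt, tendsto_iff_norm_sub_tendsto_zero]
  refine squeeze_zero (fun _ => norm_nonneg _) (fun y => ?_) ((hball.comp hdist))
  simp only [Function.comp, Real.norm_eq_abs, Metric.cthickening_singleton _ dist_nonneg]
  exact ν.abs_apply_Iic_sub_le_apply_closedBall x y

theorem exists_pos_forall_apply_Icc_le (hν : ∀ x, ν {x} = 0) {ρ : ℝ} (hρ : 0 < ρ) :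
    ∃ δ : ℝ≥0, 0 < δ ∧ ∀ a b : ℝ≥0, b ≤ a + δ → (ν (Icc a b) : ℝ) ≤ ρ := by
  have huc : UniformContinuous fun x : ℝ≥0 => (ν (Iic x) : ℝ) :=
    (ν.continuous_apply_Iic hν).uniformContinuous_of_tendsto_cocompact
      (cocompact_eq_atTop (α := ℝ≥0) ▸ ν.tendsto_apply_Iic_atTop)
  obtain ⟨δ, hδ, hclose⟩ := Metric.uniformContinuous_iff.1 huc ρ hρ
  refine ⟨⟨δ / 2, by positivity⟩, NNReal.coe_pos.1 (half_pos hδ), fun a b hb => ?_⟩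
  rcases lt_or_ge b a with hba | hab
  · simp [Icc_eq_empty hba.not_ge, hρ.le]
  have hdist : dist b a < δ := by
    have hb' : (b : ℝ) ≤ a + δ / 2 := by exact_mod_cast hb
    have hab' : (a : ℝ) ≤ b := hab
    rw [NNReal.dist_eq, abs_of_nonneg (by linarith)]
    linarith
  have hIcc : (ν (Icc a b) : ℝ) ≤ ν (Ioc a b) := by
    calc (ν (Icc a b) : ℝ) ≤ ν ({a} ∪ Ioc a b) := by
          rw [singleton_union, Ioc_insert_left hab]
      _ ≤ ν {a} + ν (Ioc a b) := measureReal_union_le (μ := (ν : Measure ℝ≥0)) _ _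
      _ = ν (Ioc a b) := by rw [hν, NNReal.coe_zero, zero_add]
  linarith [ν.apply_Iic_add_apply_Ioc hab,
    (le_abs_self _).trans_lt (Real.dist_eq _ _ ▸ hclose hdist)]

end MeasureTheory.FiniteMeasure

theorem NNReal.thickening_Iic_subset (δ x : ℝ≥0) :
    Metric.thickening δ (Iic x) ⊆ Iic (x + δ) := by
  intro y hy
  obtain ⟨z, hz, hyz⟩ := Metric.mem_thickening_iff.1 hy
  have hz' : (z : ℝ) ≤ x := hz
  rw [NNReal.dist_eq] at hyz
  have : (y : ℝ) ≤ x + δ := by linarith [(abs_lt.1 hyz).2]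
  exact_mod_cast this

theorem MeasureTheory.FiniteMeasure.apply_le_apply_thickening_add {X : Type*}
    [PseudoMetricSpace X] [MeasurableSpace X] {m m' : FiniteMeasure X} {δ : ℝ}
    (h : levyProkhorovDist (m : Measure X) m' < δ) {B : Set X} (hB : MeasurableSet B) :
    (m B : ℝ) ≤ m' (Metric.thickening δ B) + δ := by
  have hδ : 0 ≤ δ := ENNReal.toReal_nonneg.trans h.le
  have hlt : levyProkhorovEDist (m : Measure X) m' < ENNReal.ofReal δ :=
    (ENNReal.lt_ofReal_iff_toReal_lt (levyProkhorovEDist_ne_top _ _)).2 h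
  have hle := left_measure_le_of_levyProkhorovEDist_lt hlt hB
  rw [ENNReal.toReal_ofReal hδ] at hle
  have := ENNReal.toReal_mono (by finiteness) hle
  rwa [ENNReal.toReal_add (measure_ne_top _ _) ENNReal.ofReal_ne_top,
    ENNReal.toReal_ofReal hδ] at this

theorem cdfClose_of_levyProkhorovDist_lt {m m' : FiniteMeasure ℝ≥0} {δ : ℝ≥0} {ω : ℝ}
    (hLP : levyProkhorovDist (m : Measure ℝ≥0) m' < δ)
    (hmod : ∀ a b : ℝ≥0, b ≤ a + δ → (m' (Icc a b) : ℝ) ≤ ω) : CdfClose m m' (ω + δ) := by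
  have hsplit : ∀ a b : ℝ≥0, (m' (Iic b) : ℝ) ≤ m' (Iic a) + m' (Icc a b) := fun a b =>
    (measureReal_mono (μ := (m' : Measure ℝ≥0)) Iic_subset_Iic_union_Icc).trans
      (measureReal_union_le _ _)
  have hthick : ∀ (ν : FiniteMeasure ℝ≥0) (a : ℝ≥0),
      (ν (Metric.thickening δ (Iic a)) : ℝ) ≤ ν (Iic (a + δ)) := fun ν a =>
    measureReal_mono (μ := (ν : Measure ℝ≥0)) (NNReal.thickening_Iic_subset δ a)
  intro x
  rw [abs_le]
  constructor
  · rcases le_total x δ with hx | hx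
    · have h₁ : (m' (Iic x) : ℝ) ≤ m' (Icc 0 x) :=
        measureReal_mono (μ := (m' : Measure ℝ≥0)) fun _ hy => ⟨zero_le, hy⟩
      linarith [hmod 0 x (by rwa [zero_add]), (m (Iic x)).coe_nonneg]
    · have hax : x - δ + δ = x := tsub_add_cancel_of_le hx
      have h₁ := FiniteMeasure.apply_le_apply_thickening_add
        (levyProkhorovDist_comm (m : Measure ℝ≥0) m' ▸ hLP) (measurableSet_Iic (a := x - δ))
      have h₂ := hthick m (x - δ)
      rw [hax] at h₂
      linarith [hsplit (x - δ) x, hmod (x - δ) x hax.ge]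
  · have h₁ := FiniteMeasure.apply_le_apply_thickening_add hLP (measurableSet_Iic (a := x))
    linarith [hthick m' x, hsplit x (x + δ), hmod x (x + δ) le_rfl]

section LevyProkhorov

variable {X : Type*} [PseudoMetricSpace X] [MeasurableSpace X] {μ ν : Measure X}
  [IsFiniteMeasure μ] [IsFiniteMeasure ν]

theorem levyProkhorovDist_le_of_forall_measureReal_le {δ : ℝ} (hδ : 0 ≤ δ)
    (h : ∀ r, δ < r → ∀ B, MeasurableSet B →
      μ.real B ≤ ν.real (Metric.thickening r B) + r ∧
        ν.real B ≤ μ.real (Metric.thickening r B) + r) :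
    levyProkhorovDist μ ν ≤ δ := by
  refine ENNReal.toReal_le_of_le_ofReal hδ
    (levyProkhorovEDist_le_of_forall _ _ _ fun ε B hε hε_top hB => ?_)
  have hr : δ < ε.toReal := (ENNReal.ofReal_lt_iff_lt_toReal hδ hε_top.ne).1 hε
  have key : ∀ (μ₁ μ₂ : Measure X) [IsFiniteMeasure μ₁] [IsFiniteMeasure μ₂],
      μ₁.real B ≤ μ₂.real (Metric.thickening ε.toReal B) + ε.toReal →
        μ₁ B ≤ μ₂ (Metric.thickening ε.toReal B) + ε := fun μ₁ μ₂ _ _ hle =>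
    calc μ₁ B = ENNReal.ofReal (μ₁.real B) := (ofReal_measureReal).symm
      _ ≤ ENNReal.ofReal (μ₂.real (Metric.thickening ε.toReal B) + ε.toReal) :=
        ENNReal.ofReal_le_ofReal hle
      _ = μ₂ (Metric.thickening ε.toReal B) + ε := by
        rw [ENNReal.ofReal_add measureReal_nonneg ENNReal.toReal_nonneg, ofReal_measureReal,
          ENNReal.ofReal_toReal hε_top.ne]
  exact ⟨key μ ν (h _ hr B hB).1, key ν μ (h _ hr B hB).2⟩

/-- Cover `B` by the cells of a partition into sets of diameter at most `δ` (the fibers of `c`)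
that it meets, plus a remainder of small measure. -/
theorem measureReal_le_measureReal_thickening_add {ι : Type*} (c : X → ι) (s : Finset ι)
    (hc : ∀ i, MeasurableSet (c ⁻¹' {i})) {δ r η τ : ℝ} (hδr : δ < r) (hη : 0 ≤ η)
    (hdiam : ∀ x y, c x = c y → dist x y ≤ δ)
    (hcell : ∀ i ∈ s, μ.real (c ⁻¹' {i}) ≤ ν.real (c ⁻¹' {i}) + η)
    (htail : μ.real (c ⁻¹' (↑s)ᶜ) ≤ τ) (B : Set X) :
    μ.real B ≤ ν.real (Metric.thickening r B) + (s.card * η + τ) := by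
  classical
  set J := s.filter fun i => (c ⁻¹' {i} ∩ B).Nonempty
  have hB : B ⊆ (⋃ i ∈ J, c ⁻¹' {i}) ∪ c ⁻¹' (↑s)ᶜ := fun y hy => by
    by_cases hys : c y ∈ s
    · exact Or.inl (mem_biUnion (Finset.mem_filter.2 ⟨hys, y, rfl, hy⟩) rfl)
    · exact Or.inr hys
  have hJ : (⋃ i ∈ J, c ⁻¹' {i}) ⊆ Metric.thickening r B := fun y hy => by
    obtain ⟨i, hi, hyi⟩ := mem_iUnion₂.1 hy
    obtain ⟨b, hbi, hbB⟩ := (Finset.mem_filter.1 hi).2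
    exact Metric.mem_thickening_iff.2 ⟨b, hbB, (hdiam y b (hyi.trans hbi.symm)).trans_lt hδr⟩
  have hcard : (J.card : ℝ) ≤ s.card := by exact_mod_cast Finset.card_filter_le _ _
  calc μ.real B ≤ μ.real (⋃ i ∈ J, c ⁻¹' {i}) + τ :=
        (measureReal_mono hB).trans ((measureReal_union_le _ _).trans (by gcongr))
    _ ≤ ∑ i ∈ J, μ.real (c ⁻¹' {i}) + τ := by gcongr; exact measureReal_biUnion_finset_le _ _
    _ ≤ ∑ i ∈ J, (ν.real (c ⁻¹' {i}) + η) + τ := by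
        gcongr with i hi; exact hcell i (Finset.mem_filter.1 hi).1
    _ = ν.real (⋃ i ∈ J, c ⁻¹' {i}) + J.card * η + τ := by
        rw [Finset.sum_add_distrib, Finset.sum_const, nsmul_eq_mul,
          measureReal_biUnion_finset ((pairwiseDisjoint_fiber c _).subset (subset_univ _))
            fun i _ => hc i]
    _ ≤ ν.real (Metric.thickening r B) + (s.card * η + τ) := by
        linarith [measureReal_mono (μ := ν) hJ, mul_le_mul_of_nonneg_right hcard hη]

end LevyProkhorov

/-- Cells of width `δ`: the fibers of `y ↦ ⌈y / δ⌉₊` are `{0}` and the intervals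
`(jδ, (j+1)δ]`. -/
theorem levyProkhorovDist_le_of_cdfClose {m m' : FiniteMeasure ℝ≥0} {ε τ : ℝ} {δ : ℝ≥0}
    (hδ : 0 < δ) (N : ℕ) (h : CdfClose m m' ε) (htail : (m' (Ioi (N * δ)) : ℝ) ≤ τ) :
    levyProkhorovDist (m : Measure ℝ≥0) m' ≤ max (δ : ℝ) (2 * (N + 2) * ε + τ) := by
  set c : ℝ≥0 → ℕ := fun y => ⌈y / δ⌉₊
  have hε : 0 ≤ ε := (abs_nonneg _).trans (h 0)
  have hc : ∀ i, MeasurableSet (c ⁻¹' {i}) := fun i =>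
    (Nat.measurable_ceil.comp (measurable_id.div_const δ)) (measurableSet_singleton i)
  have hdiam : ∀ y z, c y = c z → dist y z ≤ δ := by
    have key : ∀ y z, c y = c z → (y : ℝ) ≤ z + δ := fun y z hyz => by
      have h₁ : y / δ ≤ c y := Nat.le_ceil _
      have h₂ : (c z : ℝ≥0) < z / δ + 1 := Nat.ceil_lt_add_one zero_le
      rw [hyz] at h₁
      have h₃ := h₁.trans h₂.le
      rw [div_le_iff₀ hδ, add_mul, div_mul_cancel₀ _ hδ.ne', one_mul] at h₃
      exact_mod_cast h₃
    intro y z hyz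
    rw [NNReal.dist_eq, abs_le]
    constructor <;> linarith [key y z hyz, key z y hyz.symm]
  have hfiber0 : c ⁻¹' {0} = Iic 0 := by
    ext y; simp [c, Nat.ceil_eq_zero, hδ.ne']
  have hfiber : ∀ j : ℕ, c ⁻¹' {j + 1} = Ioc (j * δ) ((j + 1) * δ) := fun j => by
    ext y; simp [c, Nat.ceil_eq_iff, lt_div_iff₀ hδ, div_le_iff₀ hδ]
  have htailset : c ⁻¹' (↑(Finset.range (N + 1)))ᶜ = Ioi (N * δ) := by
    ext y; simp [c, Nat.lt_ceil, lt_div_iff₀ hδ]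
  have hcell : ∀ i, |(m (c ⁻¹' {i}) : ℝ) - m' (c ⁻¹' {i})| ≤ 2 * ε := by
    rintro (_ | j)
    · rw [hfiber0]; linarith [h 0]
    · have hle : (j : ℝ≥0) * δ ≤ (j + 1) * δ := by gcongr; exact le_add_of_nonneg_right zero_le_one
      rw [hfiber]
      have h₁ := abs_le.1 (h ((j + 1) * δ))
      have h₂ := abs_le.1 (h (j * δ))
      rw [abs_le]
      constructor <;> linarith [m.apply_Iic_add_apply_Ioc hle, m'.apply_Iic_add_apply_Ioc hle]
  have htail' : (m (Ioi (N * δ)) : ℝ) ≤ τ + 2 * ε := by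
    linarith [abs_le.1 (h (N * δ)), abs_le.1 h.abs_sub_apply_univ_le,
      m.apply_Iic_add_apply_Ioi (N * δ), m'.apply_Iic_add_apply_Ioi (N * δ)]
  have key : ∀ μ₁ μ₂ : FiniteMeasure ℝ≥0, (∀ i, (μ₁ (c ⁻¹' {i}) : ℝ) ≤ μ₂ (c ⁻¹' {i}) + 2 * ε) →
      (μ₁ (Ioi (N * δ)) : ℝ) ≤ τ + 2 * ε → ∀ r, max (δ : ℝ) (2 * (N + 2) * ε + τ) < r →
        ∀ B, (μ₁ : Measure ℝ≥0).real B ≤ (μ₂ : Measure ℝ≥0).real (Metric.thickening r B) + r := by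
    intro μ₁ μ₂ hcell' htail₁ r hr B
    have h := measureReal_le_measureReal_thickening_add (μ := (μ₁ : Measure ℝ≥0)) (ν := μ₂) c
      (Finset.range (N + 1)) hc ((le_max_left _ _).trans_lt hr) (by linarith : 0 ≤ 2 * ε) hdiam
      (fun i _ => hcell' i) (htailset ▸ htail₁) B
    rw [Finset.card_range] at h
    push_cast at h
    linarith [(le_max_right _ _).trans_lt hr]
  refine levyProkhorovDist_le_of_forall_measureReal_le (le_max_of_le_left δ.coe_nonneg)
    fun r hr B _ =>
      ⟨key m m' (fun i => ?_) htail' r hr B, key m' m (fun i => ?_) (by linarith) r hr B⟩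
  · exact sub_le_iff_le_add'.1 (abs_sub_le_iff.1 (hcell i)).1
  · exact sub_le_iff_le_add'.1 (abs_sub_le_iff.1 (hcell i)).2

theorem exists_forall_cdfClose_levyProkhorovDist_le (ν : FiniteMeasure ℝ≥0) {ε : ℝ}
    (hε : 0 < ε) : ∃ κ > 0, ∀ m m' : FiniteMeasure ℝ≥0, (∀ x, (m' (Ioi x) : ℝ) ≤ ν (Ioi x)) →
      CdfClose m m' κ → levyProkhorovDist (m : Measure ℝ≥0) m' ≤ ε := by
  obtain ⟨X, hX⟩ := (ν.tendsto_apply_Ioi_atTop.eventually (ge_mem_nhds (half_pos hε))).exists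
  set δ : ℝ≥0 := ⟨ε, hε.le⟩
  have hδ : 0 < δ := NNReal.coe_pos.1 hε
  set N := ⌈X / δ⌉₊
  refine ⟨ε / (4 * (N + 2)), by positivity, fun m m' hm' h => ?_⟩
  have hXN : X ≤ N * δ := (div_le_iff₀ hδ).1 (Nat.le_ceil _)
  have hτ : (m' (Ioi (N * δ)) : ℝ) ≤ ε / 2 :=
    (hm' _).trans ((measureReal_mono (μ := (ν : Measure ℝ≥0)) (Ioi_subset_Ioi hXN)).trans hX)
  refine (levyProkhorovDist_le_of_cdfClose hδ N h hτ).trans (max_le le_rfl ?_)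
  have : 2 * (N + 2) * (ε / (4 * (N + 2))) = ε / 2 := by field_simp; ring
  linarith

theorem eventually_forall_cdfClose_of_levyProkhorovDist {ι : Type*} {l : Filter ι}
    {α : ℝ → FiniteMeasure ℝ≥0} {αk : ι → ℝ → FiniteMeasure ℝ≥0} {T : ℝ}
    (hα : DMup α) (hatom : ∀ x, α T {x} = 0)
    (h : ∀ δ > 0, ∀ᶠ k in l, ∀ t ∈ Icc 0 T,
      levyProkhorovDist (αk k t : Measure ℝ≥0) (α t) < δ) :
    ∀ e > 0, ∀ᶠ k in l, ∀ t ∈ Icc 0 T, CdfClose (αk k t) (α t) e := by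
  intro e he
  obtain ⟨δ, hδ, hmod⟩ := (α T).exists_pos_forall_apply_Icc_le hatom (half_pos he)
  set δ' := min δ (Real.toNNReal (e / 2))
  have hδ' : (0 : ℝ) < δ' := NNReal.coe_pos.2 (lt_min hδ (Real.toNNReal_pos.2 (half_pos he)))
  have hδ'e : (δ' : ℝ) ≤ e / 2 :=
    (NNReal.coe_le_coe.2 (min_le_right _ _)).trans (Real.coe_toNNReal _ (half_pos he).le).le
  filter_upwards [h δ' hδ'] with k hk t ht
  refine (cdfClose_of_levyProkhorovDist_lt (ω := e / 2) (hk t ht) fun a b hab => ?_).mono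
    (by linarith)
  exact (hα.apply_mono ht.1 ht.2 _).trans
    (hmod a b (hab.trans (add_le_add_right (min_le_left _ _) _)))

section SupOverInterval

variable {ι X : Type*} {l : Filter ι} {f : ι → X → ℝ} {s : Set X}

theorem eventually_forall_lt_of_tendsto_sSup (hbdd : ∀ i, BddAbove (f i '' s))
    (h : Tendsto (fun i => sSup (f i '' s)) l (𝓝 0)) {ε : ℝ} (hε : 0 < ε) :
    ∀ᶠ i in l, ∀ x ∈ s, f i x < ε :=
  (h.eventually_lt_const hε).mono fun i hi _ hx =>
    (le_csSup (hbdd i) (mem_image_of_mem _ hx)).trans_lt hi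

theorem tendsto_sSup_of_forall_eventually_le (hs : s.Nonempty) (hf : ∀ i, ∀ x ∈ s, 0 ≤ f i x)
    (h : ∀ ε > 0, ∀ᶠ i in l, ∀ x ∈ s, f i x ≤ ε) :
    Tendsto (fun i => sSup (f i '' s)) l (𝓝 0) := by
  refine Metric.tendsto_nhds.2 fun ε hε => ?_
  filter_upwards [h (ε / 2) (half_pos hε)] with i hi
  have hle : sSup (f i '' s) ≤ ε / 2 :=
    csSup_le (hs.image _) (by rintro _ ⟨y, hy, rfl⟩; exact hi y hy)
  obtain ⟨x, hx⟩ := hs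
  have hge : 0 ≤ sSup (f i '' s) :=
    (hf i x hx).trans (le_csSup ⟨ε / 2, by rintro _ ⟨y, hy, rfl⟩; exact hi y hy⟩ ⟨x, hx, rfl⟩)
  rw [Real.dist_0_eq_abs, abs_of_nonneg hge]
  linarith

end SupOverInterval

theorem bddAbove_levyProkhorovDist_image {ζ ζ' : ℝ → FiniteMeasure ℝ≥0} (hζ : DMup ζ)
    (hζ' : DMup ζ') (T : ℝ) :
    BddAbove ((fun t => levyProkhorovDist (ζ t : Measure ℝ≥0) (ζ' t)) '' Icc 0 T) := by
  refine ⟨max (ζ T univ : ℝ) (ζ' T univ), ?_⟩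
  rintro _ ⟨t, ht, rfl⟩
  refine (ENNReal.toReal_mono (by finiteness) (levyProkhorovEDist_le_max_measure_univ _ _)).trans ?_
  rw [ENNReal.toReal_max (measure_ne_top _ _) (measure_ne_top _ _)]
  exact max_le_max (hζ.apply_mono ht.1 ht.2 univ) (hζ'.apply_mono ht.1 ht.2 univ)

theorem bddAbove_abs_sub_image {f g : ℝ → ℝ} (hf : DRup f) (hg : DRup g) (T : ℝ) :
    BddAbove ((fun t => |f t - g t|) '' Icc 0 T) := by
  refine ⟨f T + g T, ?_⟩
  rintro _ ⟨t, ht, rfl⟩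
  have hT : 0 ≤ T := ht.1.trans ht.2
  rw [abs_le]
  constructor <;> linarith [hf.2.1 t ht.1, hg.2.1 t ht.1, hf.2.2 ht.1 hT ht.2, hg.2.2 ht.1 hT ht.2]

theorem SolvesMVSP.eventually_forall_close {K : Type*} {l : Filter K}
    {α : ℝ → FiniteMeasure ℝ≥0} {μ : ℝ → ℝ} {ξ β : ℝ → FiniteMeasure ℝ≥0} {ι : ℝ → ℝ}
    {αk : K → ℝ → FiniteMeasure ℝ≥0} {μk : K → ℝ → ℝ} {ξk βk : K → ℝ → FiniteMeasure ℝ≥0}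
    {ιk : K → ℝ → ℝ} {T : ℝ} (hα : DMup α) (hμ : DRup μ) (hβ : DMup β) (hι : DRup ι)
    (hS : SolvesMVSP α μ ξ β ι) (hμk : ∀ k, DRup (μk k))
    (hsolk : ∀ k, DMup (βk k) ∧ DRup (ιk k) ∧ SolvesMVSP (αk k) (μk k) (ξk k) (βk k) (ιk k))
    (hαclose : ∀ e > 0, ∀ᶠ k in l, ∀ t ∈ Icc 0 T, CdfClose (αk k t) (α t) e)
    (hμclose : ∀ e > 0, ∀ᶠ k in l, ∀ t ∈ Icc 0 T, |μk k t - μ t| < e) :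
    ∀ ε > 0, ∀ᶠ k in l, ∀ t ∈ Icc 0 T,
      levyProkhorovDist (ξk k t : Measure ℝ≥0) (ξ t) ≤ ε ∧
        levyProkhorovDist (βk k t : Measure ℝ≥0) (β t) ≤ ε ∧ |ιk k t - ι t| ≤ ε := by
  intro ε hε
  obtain ⟨κ, hκ, hLP⟩ := exists_forall_cdfClose_levyProkhorovDist_le (α T) hε
  have he : 0 < min (κ / 5) (ε / 6) := lt_min (by positivity) (by positivity)
  filter_upwards [hαclose _ he, hμclose _ he] with k hαe hμe t ht
  obtain ⟨hβk, hιk, hSk⟩ := hsolk k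
  obtain ⟨hξc, hβc, hιc⟩ := hS.cdfClose_of_cdfClose hμ hβ hι (hμk k) hβk hιk hSk ht.1
    (fun s hs => hαe s ⟨hs.1, hs.2.trans ht.2⟩) fun s hs => (hμe s ⟨hs.1, hs.2.trans ht.2⟩).le
  have hdom : ∀ A, (ξ t A : ℝ) ≤ α T A ∧ (β t A : ℝ) ≤ α T A := fun A =>
    ⟨(hS.apply_le ht.1 A).1.trans (hα.apply_mono ht.1 ht.2 A),
      (hS.apply_le ht.1 A).2.trans (hα.apply_mono ht.1 ht.2 A)⟩
  have h₁ := min_le_left (κ / 5) (ε / 6)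
  have h₂ := min_le_right (κ / 5) (ε / 6)
  exact ⟨hLP _ _ (fun _ => (hdom _).1) (hξc.mono (by linarith)),
    hLP _ _ (fun _ => (hdom _).2) (hβc.mono (by linarith)), hιc.trans (by linarith)⟩

theorem mvsp_continuity_of_map_general
    (αk : ℕ → ℝ → FiniteMeasure ℝ≥0) (μk : ℕ → ℝ → ℝ)
    (α : ℝ → FiniteMeasure ℝ≥0) (μ : ℝ → ℝ)
    (hαk : ∀ k, DMup (αk k)) (hμk : ∀ k, DRup (μk k))
    (hα : DMup α) (hμ : DRup μ)
    (hαatomless : ∀ t : ℝ, 0 ≤ t → ∀ x : ℝ≥0, α t ({x} : Set ℝ≥0) = 0)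
    (hconvα : ∀ T : ℝ, 0 < T →
      Filter.Tendsto
        (fun k => sSup ((fun t =>
          levyProkhorovDist (αk k t : Measure ℝ≥0) (α t : Measure ℝ≥0)) '' Set.Icc 0 T))
        Filter.atTop (nhds 0))
    (hconvμ : ∀ T : ℝ, 0 < T →
      Filter.Tendsto
        (fun k => sSup ((fun t => |μk k t - μ t|) '' Set.Icc 0 T))
        Filter.atTop (nhds 0))
    (ξk βk : ℕ → ℝ → FiniteMeasure ℝ≥0) (ιk : ℕ → ℝ → ℝ)
    (hsolk : ∀ k, DM (ξk k) ∧ DMup (βk k) ∧ DRup (ιk k) ∧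
      SolvesMVSP (αk k) (μk k) (ξk k) (βk k) (ιk k))
    (ξ β : ℝ → FiniteMeasure ℝ≥0) (ι : ℝ → ℝ)
    (hsol : DM ξ ∧ DMup β ∧ DRup ι ∧ SolvesMVSP α μ ξ β ι) :
    ∀ T : ℝ, 0 < T →
      (Filter.Tendsto
        (fun k => sSup ((fun t =>
          levyProkhorovDist (ξk k t : Measure ℝ≥0) (ξ t : Measure ℝ≥0)) '' Set.Icc 0 T))
        Filter.atTop (nhds 0)) ∧
      (Filter.Tendsto
        (fun k => sSup ((fun t =>
          levyProkhorovDist (βk k t : Measure ℝ≥0) (β t : Measure ℝ≥0)) '' Set.Icc 0 T))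
        Filter.atTop (nhds 0)) ∧
      (Filter.Tendsto
        (fun k => sSup ((fun t => |ιk k t - ι t|) '' Set.Icc 0 T))
        Filter.atTop (nhds 0)) := by
  intro T hT
  obtain ⟨-, hβ, hι, hS⟩ := hsol
  have hclose := hS.eventually_forall_close hα hμ hβ hι hμk (fun k => (hsolk k).2)
    (eventually_forall_cdfClose_of_levyProkhorovDist hα (hαatomless T hT.le) fun δ hδ =>
      eventually_forall_lt_of_tendsto_sSup
        (fun k => bddAbove_levyProkhorovDist_image (hαk k) hα T) (hconvα T hT) hδ)
    fun e he => eventually_forall_lt_of_tendsto_sSup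
      (fun k => bddAbove_abs_sub_image (hμk k) hμ T) (hconvμ T hT) he
  have h0T : (0 : ℝ) ∈ Icc 0 T := ⟨le_rfl, hT.le⟩
  exact ⟨tendsto_sSup_of_forall_eventually_le ⟨0, h0T⟩ (fun _ _ _ => ENNReal.toReal_nonneg)
      fun ε hε => (hclose ε hε).mono fun _ hk t ht => (hk t ht).1,
    tendsto_sSup_of_forall_eventually_le ⟨0, h0T⟩ (fun _ _ _ => ENNReal.toReal_nonneg)
      fun ε hε => (hclose ε hε).mono fun _ hk t ht => (hk t ht).2.1,
    tendsto_sSup_of_forall_eventually_le ⟨0, h0T⟩ (fun _ _ _ => abs_nonneg _)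
      fun ε hε => (hclose ε hε).mono fun _ hk t ht => (hk t ht).2.2⟩

/-- Continuity of the measure-valued Skorokhod map: if `(α^k,μ^k)` converges to
`(α,μ)` uniformly on compacts (in the Lévy–Prokhorov metric for the measure
component), where `α` is continuous with atomless values and `μ` is continuous,
then the corresponding solutions of the MVSP converge uniformly on compacts. -/
theorem mvsp_continuity_of_map
    (αk : ℕ → ℝ → FiniteMeasure ℝ≥0) (μk : ℕ → ℝ → ℝ)
    (α : ℝ → FiniteMeasure ℝ≥0) (μ : ℝ → ℝ)
    (hαk : ∀ k, DMup (αk k)) (hμk : ∀ k, DRup (μk k))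
    (hα : DMup α) (hμ : DRup μ)
    (hαcont : ContinuousOn α (Set.Ici 0))
    (hαatomless : ∀ t : ℝ, 0 ≤ t → ∀ x : ℝ≥0, α t ({x} : Set ℝ≥0) = 0)
    (hμcont : ContinuousOn μ (Set.Ici 0))
    (hconvα : ∀ T : ℝ, 0 < T →
      Filter.Tendsto
        (fun k => sSup ((fun t =>
          levyProkhorovDist (αk k t : Measure ℝ≥0) (α t : Measure ℝ≥0)) '' Set.Icc 0 T))
        Filter.atTop (nhds 0))
    (hconvμ : ∀ T : ℝ, 0 < T →
      Filter.Tendsto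
        (fun k => sSup ((fun t => |μk k t - μ t|) '' Set.Icc 0 T))
        Filter.atTop (nhds 0))
    (ξk βk : ℕ → ℝ → FiniteMeasure ℝ≥0) (ιk : ℕ → ℝ → ℝ)
    (hsolk : ∀ k, DM (ξk k) ∧ DMup (βk k) ∧ DRup (ιk k) ∧
      SolvesMVSP (αk k) (μk k) (ξk k) (βk k) (ιk k))
    (ξ β : ℝ → FiniteMeasure ℝ≥0) (ι : ℝ → ℝ)
    (hsol : DM ξ ∧ DMup β ∧ DRup ι ∧ SolvesMVSP α μ ξ β ι) :
    ∀ T : ℝ, 0 < T →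
      (Filter.Tendsto
        (fun k => sSup ((fun t =>
          levyProkhorovDist (ξk k t : Measure ℝ≥0) (ξ t : Measure ℝ≥0)) '' Set.Icc 0 T))
        Filter.atTop (nhds 0)) ∧
      (Filter.Tendsto
        (fun k => sSup ((fun t =>
          levyProkhorovDist (βk k t : Measure ℝ≥0) (β t : Measure ℝ≥0)) '' Set.Icc 0 T))
        Filter.atTop (nhds 0)) ∧
      (Filter.Tendsto
        (fun k => sSup ((fun t => |ιk k t - ι t|) '' Set.Icc 0 T))
        Filter.atTop (nhds 0)) :=
  mvsp_continuity_of_map_general αk μk α μ hαk hμk hα hμ hαatomless hconvα hconvμ ξk βk ιk hsolk ξ β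
    ι hsol

end
end

section
/- Let (α,μ) ∈ D_M^↑ × D_ℝ^↑, let ρ ∈ D_ℝ^↑, and let (ξ,β,ι) be the unique solution of the MVSP for (α, μ+ρ). Then: (a) for every t ≥ 0, the map a ↦ ξ_t[0, t+a] from [0,∞) to [0,∞) is right-continuous; (b) for every a ≥ 0, the map t ↦ ξ_t[0, t+a] is right-continuous; and (c) if in addition ξ_t[0,t) = 0 for all t > 0, then the map σ : [0,∞) → ℝ ∪ {∞} defined by σ(t) = inf supp[ξ_t] (with σ(t) = ∞ when ξ_t = 0) is Borel measurable. -/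
open MeasureTheory Filter Set
open scoped NNReal ENNReal BoundedContinuousFunction Topology

noncomputable section

/-!
By equation (1) of the MVSP and `β_s(x,∞) = β_s[0,∞) − β_s[0,x]`,
`ξ_s[0,y] = α_s[0,y] − (μ + ρ)(s) + β_s[0,∞) − β_s[0,y] + ι(s)`. For `ζ = α, β` the map
`(s, y) ↦ ζ_s[0,y]` is nondecreasing in both variables and right-continuous in each separately:
in `y` as a distribution function, in `s` because weak convergence gives `limsup ζ_s(F) ≤ ζ_t(F)`
on closed sets `F` (portmanteau) while monotonicity gives the reverse bound. Such a function is
right-continuous along every nondecreasing right-continuous curve `y = g(s)`; with `g(s) = s + a`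
this is (b), and (a) is the right-continuity of a distribution function.
For (c), `σ(ν) = inf {q⁺ : q ∈ ℚ, ν[0,q⁺] ≠ 0}`, and each `t ↦ ξ_t[0,x]` is right-continuous on
`[0,∞)`, hence Borel.
-/

theorem continuousWithinAt_Ici_comp_of_monotone₂ {α β γ : Type*} [TopologicalSpace α]
    [Preorder α] [TopologicalSpace β] [LinearOrder β] [OrderTopology β] [DenselyOrdered β]
    [NoMaxOrder β] [TopologicalSpace γ] [LinearOrder γ] [OrderTopology γ]
    {F : α → β → γ} {g : α → β} {t : α}
    (hF₁ : ∀ y, MonotoneOn (F · y) (Ici t)) (hF₂ : ∀ s, Monotone (F s))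
    (hFt : ∀ y, ContinuousWithinAt (F · y) (Ici t) t)
    (hFy : ContinuousWithinAt (F t) (Ici (g t)) (g t))
    (hg : ContinuousWithinAt g (Ici t) t) (hgm : MonotoneOn g (Ici t)) :
    ContinuousWithinAt (fun s => F s (g s)) (Ici t) t := by
  rw [ContinuousWithinAt, tendsto_order]
  constructor
  · intro b hb
    filter_upwards [self_mem_nhdsWithin] with s hs
    exact hb.trans_le ((hF₁ (g t) (mem_Ici.2 le_rfl) hs hs).trans
      (hF₂ s (hgm (mem_Ici.2 le_rfl) hs hs)))
  · intro b hb
    obtain ⟨y, hyb, hy⟩ : ∃ y, F t y < b ∧ g t < y :=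
      (((continuousWithinAt_Ioi_iff_Ici.2 hFy).eventually (eventually_lt_nhds hb)).and
        self_mem_nhdsWithin).exists
    filter_upwards [(hFt y).eventually (eventually_lt_nhds hyb),
      hg.eventually (eventually_lt_nhds hy)] with s hsb hgs
    exact (hF₂ s hgs.le).trans_lt hsb

theorem measurable_restrict_Ici_of_continuousWithinAt {E : Type*} [TopologicalSpace E]
    [TopologicalSpace.PseudoMetrizableSpace E] [MeasurableSpace E] [BorelSpace E]
    {f : ℝ → E} {c : ℝ} (hf : ∀ t, c ≤ t → ContinuousWithinAt f (Ici t) t) :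
    Measurable fun t : Ici c => f t := by
  set u : ℕ → ℝ → ℝ := fun n t => ⌈t * (n + 1)⌉ / (n + 1)
  have hu_ge (n : ℕ) (t : ℝ) : t ≤ u n t := by
    rw [le_div_iff₀ (by positivity)]
    exact Int.le_ceil _
  have hu_le (n : ℕ) (t : ℝ) : u n t ≤ t + 1 / (n + 1) := by
    rw [div_le_iff₀ (by positivity), add_mul, one_div_mul_cancel (by positivity)]
    exact (Int.ceil_lt_add_one _).le
  have hu_lim (t : ℝ) : Tendsto (fun n => u n t) atTop (𝓝[Ici t] t) := by
    refine tendsto_nhdsWithin_of_tendsto_nhds_of_eventually_within _ ?_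
      (Eventually.of_forall fun n => hu_ge n t)
    have h := (tendsto_const_nhds (x := t)).add (tendsto_one_div_add_atTop_nhds_zero_nat (𝕜 := ℝ))
    rw [add_zero] at h
    exact tendsto_of_tendsto_of_tendsto_of_le_of_le tendsto_const_nhds h (hu_ge · t) (hu_le · t)
  refine measurable_of_tendsto_metrizable (f := fun n (t : Ici c) => f (u n t)) (fun n => ?_)
    (tendsto_pi_nhds.2 fun t => (hf t t.2).tendsto.comp (hu_lim t))
  exact (measurable_of_countable fun k : ℤ => f (k / (n + 1))).comp
    (Int.measurable_ceil.comp (measurable_subtype_coe.mul_const _))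

namespace MeasureTheory.FiniteMeasure

section OuterApprox

variable {Ω : Type*} [MeasurableSpace Ω] [TopologicalSpace Ω] [HasOuterApproxClosed Ω]
  [OpensMeasurableSpace Ω]

theorem apply_le_apply_of_testAgainstNN_le {μ ν : FiniteMeasure Ω}
    (h : ∀ f : Ω →ᵇ ℝ≥0, μ.testAgainstNN f ≤ ν.testAgainstNN f) {F : Set Ω}
    (hF : IsClosed F) : μ F ≤ ν F := by
  rw [← ENNReal.coe_le_coe, ennreal_coeFn_eq_coeFn_toMeasure, ennreal_coeFn_eq_coeFn_toMeasure]
  refine le_of_tendsto_of_tendsto' (HasOuterApproxClosed.tendsto_lintegral_apprSeq hF μ)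
    (HasOuterApproxClosed.tendsto_lintegral_apprSeq hF ν) fun n => ?_
  simpa only [testAgainstNN_coe_eq] using ENNReal.coe_le_coe.2 (h (hF.apprSeq n))

theorem continuousWithinAt_apply_of_isClosed {ι : Type*} [TopologicalSpace ι] [Preorder ι]
    {ζ : ι → FiniteMeasure Ω} {t : ι} (hc : ContinuousWithinAt ζ (Ici t) t)
    (hm : ∀ f : Ω →ᵇ ℝ≥0, MonotoneOn (fun s => (ζ s).testAgainstNN f) (Ici t))
    {F : Set Ω} (hF : IsClosed F) :
    ContinuousWithinAt (fun s => ζ s F) (Ici t) t := by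
  have hle : ∀ᶠ s in 𝓝[Ici t] t, (ζ t : Measure Ω) F ≤ (ζ s : Measure Ω) F := by
    filter_upwards [self_mem_nhdsWithin] with s hs
    simpa only [← ennreal_coeFn_eq_coeFn_toMeasure, ENNReal.coe_le_coe] using
      apply_le_apply_of_testAgainstNN_le (fun f => hm f (mem_Ici.2 le_rfl) hs hs) hF
  have hlim : Tendsto (fun s => (ζ s : Measure Ω) F) (𝓝[Ici t] t) (𝓝 ((ζ t : Measure Ω) F)) :=
    tendsto_of_le_liminf_of_limsup_le (le_liminf_of_le (by isBoundedDefault) hle)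
      (limsup_measure_closed_le_of_tendsto hc hF)
  rw [ContinuousWithinAt]
  simpa only [Function.comp_def, ← ennreal_coeFn_eq_coeFn_toMeasure, ENNReal.toNNReal_coe]
    using (ENNReal.tendsto_toNNReal (measure_ne_top _ F)).comp hlim

end OuterApprox

section LinearOrder

variable {Ω : Type*} [MeasurableSpace Ω] [TopologicalSpace Ω] [LinearOrder Ω] [OrderTopology Ω]
  [OpensMeasurableSpace Ω]

theorem coe_apply_Ioi (ν : FiniteMeasure Ω) (x : Ω) :
    (ν (Ioi x) : ℝ) = ν univ - ν (Iic x) := by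
  rw [← compl_Iic]
  exact measureReal_compl measurableSet_Iic

variable [DenselyOrdered Ω] [NoMaxOrder Ω] [FirstCountableTopology Ω]

theorem continuousWithinAt_apply_Iic (ν : FiniteMeasure Ω) (x : Ω) :
    ContinuousWithinAt (fun y => ν (Iic y)) (Ici x) x := by
  have hIic : ⋂ y > x, Iic y = Iic x := by
    ext z
    simpa only [mem_iInter, mem_Iic] using
      ⟨fun h => le_of_forall_gt_imp_ge_of_dense h, fun h y hy => h.trans hy.le⟩
  have hlim : Tendsto (fun y => (ν : Measure Ω) (Iic y)) (𝓝[>] x)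
      (𝓝 ((ν : Measure Ω) (Iic x))) := by
    simpa only [hIic, Function.comp_def] using
      tendsto_measure_biInter_gt (μ := (ν : Measure Ω)) (a := x)
        (fun y _ => measurableSet_Iic.nullMeasurableSet) (fun _ _ _ hyz => Iic_subset_Iic.2 hyz)
        (let ⟨y, hy⟩ := exists_gt x; ⟨y, hy, measure_ne_top _ _⟩)
  rw [← continuousWithinAt_Ioi_iff_Ici, ContinuousWithinAt]
  simpa only [Function.comp_def, ← ennreal_coeFn_eq_coeFn_toMeasure, ENNReal.toNNReal_coe]
    using (ENNReal.tendsto_toNNReal (measure_ne_top _ _)).comp hlim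

theorem continuousWithinAt_apply_Iic_comp {ι : Type*}
    [TopologicalSpace ι] [Preorder ι] [HasOuterApproxClosed Ω] {ζ : ι → FiniteMeasure Ω} {t : ι}
    (hc : ContinuousWithinAt ζ (Ici t) t)
    (hm : ∀ f : Ω →ᵇ ℝ≥0, MonotoneOn (fun s => (ζ s).testAgainstNN f) (Ici t))
    {g : ι → Ω} (hg : ContinuousWithinAt g (Ici t) t) (hgm : MonotoneOn g (Ici t)) :
    ContinuousWithinAt (fun s => ζ s (Iic (g s))) (Ici t) t :=
  continuousWithinAt_Ici_comp_of_monotone₂ (F := fun s y => ζ s (Iic y))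
    (fun _ _ hs _ hs' hss' => apply_le_apply_of_testAgainstNN_le
      (fun f => hm f hs hs' hss') isClosed_Iic)
    (fun s _ _ hyy' => (ζ s).apply_mono (Iic_subset_Iic.2 hyy'))
    (fun _ => continuousWithinAt_apply_of_isClosed hc hm isClosed_Iic)
    ((ζ t).continuousWithinAt_apply_Iic (g t)) hg hgm

end LinearOrder

end MeasureTheory.FiniteMeasure

theorem measSupport_eq_support (ν : FiniteMeasure ℝ≥0) :
    measSupport ν = (ν : Measure ℝ≥0).support := by
  simp only [measSupport, Measure.support_eq_forall_isOpen, pos_iff_ne_zero, ne_eq,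
    FiniteMeasure.null_iff_toMeasure_null]
  exact Set.ext fun x => forall_congr' fun u => forall_comm

theorem sigmaOf_eq_iInf (ν : FiniteMeasure ℝ≥0) :
    sigmaOf ν =
      ⨅ q : ℚ, if ν (Iic (q : ℝ).toNNReal) = 0 then ⊤ else ((q : ℝ).toNNReal : ℝ≥0∞) := by
  rw [sigmaOf, measSupport_eq_support]
  apply le_antisymm
  · refine le_iInf fun q => ?_
    split_ifs with hq
    · exact le_top
    obtain ⟨y, hyq, hy⟩ := Measure.nonempty_inter_support_of_pos
      (pos_iff_ne_zero.2 ((ν.null_iff_toMeasure_null _).not.1 hq))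
    exact (sInf_le (mem_image_of_mem _ hy)).trans (ENNReal.coe_le_coe.2 hyq)
  · refine le_sInf ?_
    rintro _ ⟨x, hx, rfl⟩
    refine ENNReal.le_of_forall_pos_le_add fun ε hε _ => ?_
    obtain ⟨q, -, hxq, hqε⟩ :=
      (NNReal.lt_iff_exists_rat_btwn x (x + ε)).1 (lt_add_of_pos_right x hε)
    have hq : ν (Iic (q : ℝ).toNNReal) ≠ 0 := (ν.null_iff_toMeasure_null _).not.2
      ((Measure.mem_support_iff_forall x).1 hx _ (Iic_mem_nhds hxq)).ne'
    refine (iInf_le _ q).trans ?_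
    rw [if_neg hq, ← ENNReal.coe_add]
    exact ENNReal.coe_le_coe.2 hqε.le

theorem Measurable.sigmaOf {T : Type*} [MeasurableSpace T] {ζ : T → FiniteMeasure ℝ≥0}
    (hζ : ∀ x, Measurable fun t => (ζ t (Iic x) : ℝ)) : Measurable fun t => sigmaOf (ζ t) := by
  simp only [sigmaOf_eq_iInf]
  refine Measurable.iInf fun q => Measurable.ite ?_ measurable_const measurable_const
  simpa only [preimage, mem_singleton_iff, NNReal.coe_eq_zero] using
    hζ _ (measurableSet_singleton 0)

theorem SolvesMVSP.continuousWithinAt_apply_Iic {α ξ β : ℝ → FiniteMeasure ℝ≥0} {μ ι : ℝ → ℝ}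
    (hsol : SolvesMVSP α μ ξ β ι) (hα : DMup α) (hβ : DMup β) {t : ℝ} (ht : 0 ≤ t)
    (hμ : ContinuousWithinAt μ (Ici t) t) (hι : ContinuousWithinAt ι (Ici t) t)
    {g : ℝ → ℝ≥0} (hg : ContinuousWithinAt g (Ici t) t) (hgm : MonotoneOn g (Ici t)) :
    ContinuousWithinAt (fun s => (ξ s (Iic (g s)) : ℝ)) (Ici t) t := by
  have hmono {ζ : ℝ → FiniteMeasure ℝ≥0} (hζ : DMup ζ) (f : ℝ≥0 →ᵇ ℝ≥0) :
      MonotoneOn (fun s => (ζ s).testAgainstNN f) (Ici t) :=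
    (hζ.2 f).mono (Ici_subset_Ici.2 ht)
  have hα' := NNReal.continuous_coe.continuousAt.comp_continuousWithinAt
    (FiniteMeasure.continuousWithinAt_apply_Iic_comp (hα.1.1 t ht) (hmono hα) hg hgm)
  have hβ' := NNReal.continuous_coe.continuousAt.comp_continuousWithinAt
    (FiniteMeasure.continuousWithinAt_apply_Iic_comp (hβ.1.1 t ht) (hmono hβ) hg hgm)
  have hβuniv := NNReal.continuous_coe.continuousAt.comp_continuousWithinAt
    (FiniteMeasure.continuousWithinAt_apply_of_isClosed (hβ.1.1 t ht) (hmono hβ) isClosed_univ)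
  have hξ : ∀ s ∈ Ici t, (ξ s (Iic (g s)) : ℝ) =
      α s (Iic (g s)) - μ s + (β s univ - β s (Iic (g s))) + ι s := fun s hs => by
    rw [hsol.1 _ s (ht.trans hs), FiniteMeasure.coe_apply_Ioi]
  exact (((hα'.sub hμ).add (hβuniv.sub hβ')).add hι).congr hξ (hξ t (mem_Ici.2 le_rfl))

theorem xi_right_continuity_and_sigma_measurable_general
    (α ξ β : ℝ → FiniteMeasure ℝ≥0) (μ ι ρ : ℝ → ℝ)
    (hα : DMup α) (hμ : DRup μ) (hρ : DRup ρ)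
    (hβ : DMup β) (hι : DRup ι)
    (hsol : SolvesMVSP α (fun t => μ t + ρ t) ξ β ι) :
    (∀ t : ℝ, 0 ≤ t → ∀ a : ℝ, 0 ≤ a →
      ContinuousWithinAt
        (fun a' : ℝ => (ξ t (Set.Iic (Real.toNNReal (t + a'))) : ℝ)) (Set.Ici a) a) ∧
    (∀ a : ℝ, 0 ≤ a → ∀ t : ℝ, 0 ≤ t →
      ContinuousWithinAt
        (fun t' : ℝ => (ξ t' (Set.Iic (Real.toNNReal (t' + a))) : ℝ)) (Set.Ici t) t) ∧
    ((∀ t : ℝ, 0 < t → (ξ t (Set.Iio (Real.toNNReal t)) : ℝ) = 0) →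
      Measurable ((Set.Ici (0:ℝ)).restrict (fun t => sigmaOf (ξ t)))) := by
  have hξ {t : ℝ} (ht : 0 ≤ t) {g : ℝ → ℝ≥0} (hg : ContinuousWithinAt g (Ici t) t)
      (hgm : MonotoneOn g (Ici t)) :
      ContinuousWithinAt (fun s => (ξ s (Iic (g s)) : ℝ)) (Ici t) t :=
    hsol.continuousWithinAt_apply_Iic hα hβ ht ((hμ.1.1 t ht).add (hρ.1.1 t ht)) (hι.1.1 t ht)
      hg hgm
  refine ⟨fun t _ a _ => ?_, fun a _ t ht => ?_, fun _ => ?_⟩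
  · exact NNReal.continuous_coe.continuousAt.comp_continuousWithinAt
      (((ξ t).continuousWithinAt_apply_Iic _).comp (by fun_prop : ContinuousWithinAt _ _ _)
        fun _ h => Real.toNNReal_mono (by linarith [mem_Ici.1 h]))
  · exact hξ ht (by fun_prop : ContinuousWithinAt _ _ _)
      fun _ _ _ _ h => Real.toNNReal_mono (by linarith)
  · exact Measurable.sigmaOf fun x => measurable_restrict_Ici_of_continuousWithinAt
      fun t ht => hξ ht continuousWithinAt_const monotoneOn_const

/-- Regularity of `ξ` for the solution of the MVSP for data `(α, μ+ρ)`: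
right-continuity of `a ↦ ξ_t[0,t+a]` and of `t ↦ ξ_t[0,t+a]`, and Borel
measurability of `σ(t) = inf supp[ξ_t]` on `[0,∞)` when `ξ_t[0,t) = 0`. -/
theorem xi_right_continuity_and_sigma_measurable
    (α ξ β : ℝ → FiniteMeasure ℝ≥0) (μ ι ρ : ℝ → ℝ)
    (hα : DMup α) (hμ : DRup μ) (hρ : DRup ρ)
    (hξ : DM ξ) (hβ : DMup β) (hι : DRup ι)
    (hsol : SolvesMVSP α (fun t => μ t + ρ t) ξ β ι) :
    (∀ t : ℝ, 0 ≤ t → ∀ a : ℝ, 0 ≤ a →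
      ContinuousWithinAt
        (fun a' : ℝ => (ξ t (Set.Iic (Real.toNNReal (t + a'))) : ℝ)) (Set.Ici a) a) ∧
    (∀ a : ℝ, 0 ≤ a → ∀ t : ℝ, 0 ≤ t →
      ContinuousWithinAt
        (fun t' : ℝ => (ξ t' (Set.Iic (Real.toNNReal (t' + a))) : ℝ)) (Set.Ici t) t) ∧
    ((∀ t : ℝ, 0 < t → (ξ t (Set.Iio (Real.toNNReal t)) : ℝ) = 0) →
      Measurable ((Set.Ici (0:ℝ)).restrict (fun t => sigmaOf (ξ t)))) :=
  xi_right_continuity_and_sigma_measurable_general α ξ β μ ι ρ hα hμ hρ hβ hι hsol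

end
end
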